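/- arXiv:2102.02958 — 2 statements merged into one kernel-verified Lean document; each statement's English description precedes it below -/
import Mathlib

section
/- Let N be even, M = N/2+1, φ = π/N, and let (a₁,…,a_{M-1}) solve the reduced system 2k a₂ + ω a₁ - a₁³ = 0; k(a_{n+1}+a_{n-1}) + ω a_n - a_n³ = 0 for n = 2,…,M-2; k a_{M-2} + ω a_{M-1} - a_{M-1}³ = 0. Define a_M = 0, a_{M+j} = a_{M-j} for j=1,…,M-2, θ₁ = 0, θ_j = (j-1)φ for j = 2,…,M-1, θ_M = 0, θ_{M+j} = -θ_{M-j} for j = 1,…,M-2. Then (a_n, θ_n) satisfies the full real standing-wave system with twist φ, and site M is dark (a_M = 0). -/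
/-- For `N` even, `M = N/2 + 1`, `φ = π/N`: a solution of the reduced
system, extended by `a_M = 0`, the amplitude symmetry `a_{M+j} = a_{M-j}`, and the
phases `θ₁ = 0`, `θ_j = (j-1)φ` (`j = 2,…,M-1`), `θ_M = 0`, `θ_{M+j} = -θ_{M-j}`,
satisfies the full real standing-wave system (indices mod `N`), with dark site `M`. -/
theorem extended_solution_solves_full_system (N : ℕ) (hN : 4 ≤ N) (hNeven : Even N)
    (M : ℕ) (hM : M = N / 2 + 1) (k ω φ : ℝ) (hφ : φ = Real.pi / N)
    (a θ : ZMod N → ℝ)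
    -- reduced system on sites 1,…,M-1
    (hred1 : 2 * k * a (2 : ZMod N) + ω * a (1 : ZMod N) - (a (1 : ZMod N)) ^ 3 = 0)
    (hred2 : ∀ n : ℕ, 2 ≤ n → n ≤ M - 2 →
      k * (a (((n + 1 : ℕ) : ZMod N)) + a (((n - 1 : ℕ) : ZMod N)))
        + ω * a ((n : ℕ) : ZMod N) - (a ((n : ℕ) : ZMod N)) ^ 3 = 0)
    (hred3 : k * a (((M - 2 : ℕ) : ZMod N)) + ω * a (((M - 1 : ℕ) : ZMod N))
        - (a (((M - 1 : ℕ) : ZMod N))) ^ 3 = 0)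
    -- extension
    (haM : a ((M : ℕ) : ZMod N) = 0)
    (hasym : ∀ j : ℕ, 1 ≤ j → j ≤ M - 2 →
      a (((M + j : ℕ) : ZMod N)) = a (((M - j : ℕ) : ZMod N)))
    (hθ1 : θ (1 : ZMod N) = 0)
    (hθ : ∀ j : ℕ, 2 ≤ j → j ≤ M - 1 → θ ((j : ℕ) : ZMod N) = ((j : ℝ) - 1) * φ)
    (hθM : θ ((M : ℕ) : ZMod N) = 0)
    (hθsym : ∀ j : ℕ, 1 ≤ j → j ≤ M - 2 →
      θ (((M + j : ℕ) : ZMod N)) = -θ (((M - j : ℕ) : ZMod N))) :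
    (∀ n : ZMod N,
      k * (a (n + 1) * Real.cos (θ (n + 1) - θ n - φ)
          + a (n - 1) * Real.cos (θ n - θ (n - 1) - φ))
        + ω * a n - (a n) ^ 3 = 0) ∧
    (∀ n : ZMod N,
      a (n + 1) * Real.sin (θ (n + 1) - θ n - φ)
        - a (n - 1) * Real.sin (θ n - θ (n - 1) - φ) = 0) ∧
    a ((M : ℕ) : ZMod N) = 0 := by
  haveI : NeZero N := ⟨by omega⟩
  obtain ⟨r, hr⟩ := hNeven
  have hNM : N = 2 * M - 2 := by omega
  have hM3 : 3 ≤ M := by omega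
  have hMr : (N : ℝ) + 2 = 2 * (M : ℝ) := by exact_mod_cast (by omega : N + 2 = 2 * M)
  have hπ : Real.pi = (N : ℝ) * φ := by
    rw [hφ]; field_simp
  have hhalf : ((M : ℝ) - 1) * φ = Real.pi / 2 := by
    rw [hπ]; linear_combination (-φ / 2) * hMr
  -- θ on [1, M-1]
  have hθa : ∀ t : ℕ, 1 ≤ t → t ≤ M - 1 → θ ((t : ℕ) : ZMod N) = ((t : ℝ) - 1) * φ := by
    intro t h1 h2
    rcases Nat.lt_or_ge t 2 with h | h
    · have ht : t = 1 := by omega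
      subst ht; simp [hθ1]
    · exact hθ t h h2
  -- θ on [M+1, N]
  have hθb : ∀ t : ℕ, M + 1 ≤ t → t ≤ N → θ ((t : ℕ) : ZMod N) = ((t : ℝ) - 1) * φ - Real.pi := by
    intro t h1 h2
    have hj := hθsym (t - M) (by omega) (by omega)
    rw [show M + (t - M) = t by omega, show M - (t - M) = 2 * M - t by omega] at hj
    rw [hj, hθa (2 * M - t) (by omega) (by omega)]
    rw [Nat.cast_sub (by omega : t ≤ 2 * M)]
    push_cast
    rw [hπ]
    linear_combination φ * hMr
  -- a symmetry on [M+1, N]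
  have hab : ∀ t : ℕ, M + 1 ≤ t → t ≤ N → a ((t : ℕ) : ZMod N) = a ((2 * M - t : ℕ) : ZMod N) := by
    intro t h1 h2
    have hj := hasym (t - M) (by omega) (by omega)
    rwa [show M + (t - M) = t by omega, show M - (t - M) = 2 * M - t by omega] at hj
  have key : ∀ s : ℕ, 1 ≤ s → s ≤ N →
      (k * (a ((s + 1 : ℕ) : ZMod N) * Real.cos (θ ((s + 1 : ℕ) : ZMod N) - θ ((s : ℕ) : ZMod N) - φ)
          + a ((s - 1 : ℕ) : ZMod N) * Real.cos (θ ((s : ℕ) : ZMod N) - θ ((s - 1 : ℕ) : ZMod N) - φ))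
        + ω * a ((s : ℕ) : ZMod N) - (a ((s : ℕ) : ZMod N)) ^ 3 = 0) ∧
      (a ((s + 1 : ℕ) : ZMod N) * Real.sin (θ ((s + 1 : ℕ) : ZMod N) - θ ((s : ℕ) : ZMod N) - φ)
        - a ((s - 1 : ℕ) : ZMod N) * Real.sin (θ ((s : ℕ) : ZMod N) - θ ((s - 1 : ℕ) : ZMod N) - φ) = 0) := by
    intro s hs1 hsN
    by_cases h1 : s = 1
    · subst h1
      simp only [show (1 + 1 : ℕ) = 2 from rfl, show (1 - 1 : ℕ) = 0 from rfl,
        Nat.cast_ofNat, Nat.cast_one, Nat.cast_zero]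
      have e0 : (0 : ZMod N) = ((N : ℕ) : ZMod N) := (ZMod.natCast_self N).symm
      have ha0 : a (0 : ZMod N) = a (2 : ZMod N) := by
        rw [e0, hab N (by omega) le_rfl, show 2 * M - N = 2 by omega]
        norm_num
      have hθ0 : θ (0 : ZMod N) = -φ := by
        rw [e0, hθb N (by omega) le_rfl, hπ]; ring
      have hθ2 : θ (2 : ZMod N) = φ := by
        have h := hθa 2 (by omega) (by omega)
        norm_num at h; exact h
      rw [ha0, hθ0, hθ1, hθ2, show φ - 0 - φ = 0 by ring, show (0 : ℝ) - -φ - φ = 0 by ring,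
        Real.cos_zero, Real.sin_zero]
      exact ⟨by linear_combination hred1, by ring⟩
    · by_cases h2 : s = N
      · rw [h2]
        have ep : ((N + 1 : ℕ) : ZMod N) = (1 : ZMod N) := by
          push_cast [ZMod.natCast_self]; ring
        have haN : a ((N : ℕ) : ZMod N) = a (2 : ZMod N) := by
          rw [hab N (by omega) le_rfl, show 2 * M - N = 2 by omega]; norm_num
        have hθN : θ ((N : ℕ) : ZMod N) = -φ := by
          rw [hθb N (by omega) le_rfl, hπ]; ring
        have hθp : θ ((N + 1 : ℕ) : ZMod N) = 0 := by rw [ep]; exact hθ1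
        have hap : a ((N + 1 : ℕ) : ZMod N) = a (1 : ZMod N) := by rw [ep]
        have dp : θ ((N + 1 : ℕ) : ZMod N) - θ ((N : ℕ) : ZMod N) - φ = 0 := by
          rw [hθp, hθN]; ring
        by_cases hM4 : M = 3
        · have haN1 : a ((N - 1 : ℕ) : ZMod N) = 0 := by
            rw [show N - 1 = M by omega]; exact haM
          rw [dp, Real.cos_zero, Real.sin_zero, haN1, hap, haN]
          have h3 := hred3
          rw [show M - 2 = 1 by omega, show M - 1 = 2 by omega] at h3
          norm_num at h3
          exact ⟨by linear_combination h3, by ring⟩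
        · have haN1 : a ((N - 1 : ℕ) : ZMod N) = a (3 : ZMod N) := by
            rw [hab (N - 1) (by omega) (by omega), show 2 * M - (N - 1) = 3 by omega]; norm_num
          have hθN1 : θ ((N - 1 : ℕ) : ZMod N) = -(2 * φ) := by
            rw [hθb (N - 1) (by omega) (by omega), Nat.cast_sub (by omega : 1 ≤ N),
              Nat.cast_one, hπ]
            ring
          have dm : θ ((N : ℕ) : ZMod N) - θ ((N - 1 : ℕ) : ZMod N) - φ = 0 := by
            rw [hθN, hθN1]; ring
          have h2' := hred2 2 le_rfl (by omega)
          norm_num at h2'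
          rw [dp, dm, Real.cos_zero, Real.sin_zero, hap, haN, haN1]
          exact ⟨by linear_combination h2', by ring⟩
      · have hs2 : 2 ≤ s := by omega
        have hsN1 : s ≤ N - 1 := by omega
        by_cases h3 : s ≤ M - 2
        · have dp : θ ((s + 1 : ℕ) : ZMod N) - θ ((s : ℕ) : ZMod N) - φ = 0 := by
            rw [hθa (s + 1) (by omega) (by omega), hθa s (by omega) (by omega)]
            push_cast; ring
          have dm : θ ((s : ℕ) : ZMod N) - θ ((s - 1 : ℕ) : ZMod N) - φ = 0 := by
            rw [hθa s (by omega) (by omega), hθa (s - 1) (by omega) (by omega),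
              Nat.cast_sub (by omega : 1 ≤ s), Nat.cast_one]
            ring
          rw [dp, dm, Real.cos_zero, Real.sin_zero]
          exact ⟨by linear_combination hred2 s hs2 h3, by ring⟩
        · by_cases h4 : s = M - 1
          · subst h4
            rw [show M - 1 + 1 = M by omega, show M - 1 - 1 = M - 2 by omega]
            have dm : θ ((M - 1 : ℕ) : ZMod N) - θ ((M - 2 : ℕ) : ZMod N) - φ = 0 := by
              rw [hθa (M - 1) (by omega) (by omega), hθa (M - 2) (by omega) (by omega),
                Nat.cast_sub (by omega : 1 ≤ M), Nat.cast_sub (by omega : 2 ≤ M)]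
              push_cast; ring
            rw [haM, dm, Real.cos_zero, Real.sin_zero]
            exact ⟨by linear_combination hred3, by ring⟩
          · by_cases h5 : s = M
            · rw [h5]
              have hp : a ((M + 1 : ℕ) : ZMod N) = a ((M - 1 : ℕ) : ZMod N) :=
                hasym 1 le_rfl (by omega)
              have hm1 : θ ((M - 1 : ℕ) : ZMod N) = ((M : ℝ) - 2) * φ := by
                rw [hθa (M - 1) (by omega) (by omega), Nat.cast_sub (by omega : 1 ≤ M)]
                push_cast; ring
              have hp1 : θ ((M + 1 : ℕ) : ZMod N) = -(((M : ℝ) - 2) * φ) := by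
                rw [hθsym 1 le_rfl (by omega), hm1]
              have dp : θ ((M + 1 : ℕ) : ZMod N) - θ ((M : ℕ) : ZMod N) - φ = -(Real.pi / 2) := by
                rw [hp1, hθM]; linear_combination -hhalf
              have dm : θ ((M : ℕ) : ZMod N) - θ ((M - 1 : ℕ) : ZMod N) - φ = -(Real.pi / 2) := by
                rw [hθM, hm1]; linear_combination -hhalf
              rw [dp, dm, haM, hp]
              constructor
              · simp [Real.cos_pi_div_two]
              · ring
            · by_cases h6 : s = M + 1
              · subst h6
                have hM4 : 4 ≤ M := by omega
                have hp : a ((M + 1 + 1 : ℕ) : ZMod N) = a ((M - 2 : ℕ) : ZMod N) := by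
                  rw [show M + 1 + 1 = M + 2 by omega]
                  exact hasym 2 (by omega) (by omega)
                have h0' : a ((M + 1 : ℕ) : ZMod N) = a ((M - 1 : ℕ) : ZMod N) :=
                  hasym 1 le_rfl (by omega)
                have hm : a ((M + 1 - 1 : ℕ) : ZMod N) = 0 := by
                  rw [show M + 1 - 1 = M by omega]; exact haM
                have dp : θ ((M + 1 + 1 : ℕ) : ZMod N) - θ ((M + 1 : ℕ) : ZMod N) - φ = 0 := by
                  rw [show M + 1 + 1 = M + 2 by omega, hθsym 2 (by omega) (by omega),
                    hθsym 1 le_rfl (by omega), hθa (M - 2) (by omega) (by omega),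
                    hθa (M - 1) (by omega) (by omega), Nat.cast_sub (by omega : 2 ≤ M),
                    Nat.cast_sub (by omega : 1 ≤ M)]
                  push_cast; ring
                rw [hp, h0', hm, dp, Real.cos_zero, Real.sin_zero]
                exact ⟨by linear_combination hred3, by ring⟩
              · have hs' : M + 2 ≤ s := by omega
                have hA0 : a ((s : ℕ) : ZMod N) = a ((2 * M - s : ℕ) : ZMod N) :=
                  hab s (by omega) (by omega)
                have hAp : a ((s + 1 : ℕ) : ZMod N) = a ((2 * M - s - 1 : ℕ) : ZMod N) := by
                  rw [hab (s + 1) (by omega) (by omega), show 2 * M - (s + 1) = 2 * M - s - 1 by omega]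
                have hAm : a ((s - 1 : ℕ) : ZMod N) = a ((2 * M - s + 1 : ℕ) : ZMod N) := by
                  rw [hab (s - 1) (by omega) (by omega), show 2 * M - (s - 1) = 2 * M - s + 1 by omega]
                have dp : θ ((s + 1 : ℕ) : ZMod N) - θ ((s : ℕ) : ZMod N) - φ = 0 := by
                  rw [hθb (s + 1) (by omega) (by omega), hθb s (by omega) (by omega)]
                  push_cast; ring
                have dm : θ ((s : ℕ) : ZMod N) - θ ((s - 1 : ℕ) : ZMod N) - φ = 0 := by
                  rw [hθb s (by omega) (by omega), hθb (s - 1) (by omega) (by omega),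
                    Nat.cast_sub (by omega : 1 ≤ s), Nat.cast_one]
                  ring
                rw [hAp, hAm, hA0, dp, dm, Real.cos_zero, Real.sin_zero]
                exact ⟨by linear_combination hred2 (2 * M - s) (by omega) (by omega), by ring⟩
  have hrepr : ∀ n : ZMod N, ∃ s : ℕ, 1 ≤ s ∧ s ≤ N ∧ n = ((s : ℕ) : ZMod N) ∧
      n + 1 = ((s + 1 : ℕ) : ZMod N) ∧ n - 1 = ((s - 1 : ℕ) : ZMod N) := by
    intro n
    have hv : n = ((n.val : ℕ) : ZMod N) := by simp [ZMod.natCast_val, ZMod.cast_id]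
    have hvN : n.val < N := ZMod.val_lt n
    by_cases h0 : n.val = 0
    · refine ⟨N, by omega, le_rfl, ?_, ?_, ?_⟩
      · rw [hv, h0]; simp [ZMod.natCast_self]
      · rw [hv, h0]; push_cast [ZMod.natCast_self]; ring
      · rw [hv, h0, Nat.cast_sub (by omega : 1 ≤ N), Nat.cast_one]
        simp [ZMod.natCast_self]
    · refine ⟨n.val, by omega, by omega, hv, ?_, ?_⟩
      · have h : ((n.val + 1 : ℕ) : ZMod N) = ((n.val : ℕ) : ZMod N) + 1 := by push_cast; ring
        rw [h, ← hv]
      · have h : ((n.val - 1 : ℕ) : ZMod N) = ((n.val : ℕ) : ZMod N) - 1 := by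
          rw [Nat.cast_sub (by omega : 1 ≤ n.val), Nat.cast_one]
        rw [h, ← hv]
  refine ⟨fun n => ?_, fun n => ?_, haM⟩
  · obtain ⟨s, hs1, hsN, he, hep, hem⟩ := hrepr n
    rw [hep, hem, he]; exact (key s hs1 hsN).1
  · obtain ⟨s, hs1, hsN, he, hep, hem⟩ := hrepr n
    rw [hep, hem, he]; exact (key s hs1 hsN).2
end

section
/- For N odd, M = (N+1)/2, ω ≠ 0, there exists k₀ > 0 such that for all |k| < k₀ the reduced system k a₃ + ω a₂ - a₂³ = 0; k(a_{n+1} + a_{n-1}) + ω a_n - a_n³ = 0 for n = 3,…,M-1; k(a_M + a_{M-1}) + ω a_M - a_M³ = 0 has a unique smooth solution branch through (0,…,0,√ω) at k = 0. -/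
open Metric ContinuousLinearMap

lemma branch_aux {E : Type*} [NormedAddCommGroup E] [NormedSpace ℝ E] [CompleteSpace E]
    (Fred : ℝ × E → E) (a₀ : E) (hF : ContDiff ℝ (⊤ : ℕ∞) Fred) (h0 : Fred (0, a₀) = 0)
    (e : (ℝ × E) ≃L[ℝ] (ℝ × E))
    (hder : HasFDerivAt (fun p : ℝ × E => (p.1, Fred p)) (e : (ℝ × E) →L[ℝ] (ℝ × E))
      ((0 : ℝ), a₀)) :
    ∃ k₀ > (0 : ℝ), ∃ g : ℝ → E, ContDiffOn ℝ (⊤ : ℕ∞) g (Metric.ball (0 : ℝ) k₀) ∧ g 0 = a₀ ∧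
      (∀ k, |k| < k₀ → Fred (k, g k) = 0) ∧
      ∃ ε > (0 : ℝ), ∀ k, |k| < k₀ → ∀ a, Fred (k, a) = 0 → dist a a₀ < ε → a = g k := by
  set F : ℝ × E → ℝ × E := fun p => (p.1, Fred p) with hFdef
  have hFc : ContDiff ℝ (⊤ : ℕ∞) F := contDiff_fst.prodMk hF
  have hFa : ContDiffAt ℝ (⊤ : ℕ∞) F (0, a₀) := hFc.contDiffAt
  set Φ := hFa.toOpenPartialHomeomorph F hder (by simp) with hΦdef
  have hΦcoe : (Φ : ℝ × E → ℝ × E) = F := rfl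
  have hsrc : ((0 : ℝ), a₀) ∈ Φ.source :=
    hFa.mem_toOpenPartialHomeomorph_source hder (by simp)
  have hF0 : F (0, a₀) = (0, 0) := by simp [hFdef, h0]
  have htgt : ((0 : ℝ), (0 : E)) ∈ Φ.target := by
    have := hFa.image_mem_toOpenPartialHomeomorph_target hder (by simp)
    rwa [hF0] at this
  have hsymm00 : Φ.symm (0, 0) = ((0 : ℝ), a₀) := by
    have := Φ.left_inv hsrc
    rwa [show Φ ((0 : ℝ), a₀) = ((0 : ℝ), (0 : E)) from by rw [hΦcoe]; exact hF0] at this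
  -- set of points where fderiv of F is invertible
  set U : Set (ℝ × E) := (fderiv ℝ F) ⁻¹' {u | IsUnit u} with hUdef
  have hUopen : IsOpen U :=
    Units.isOpen.preimage (hFc.continuous_fderiv (by simp))
  have hU0 : ((0 : ℝ), a₀) ∈ U := by
    have : fderiv ℝ F (0, a₀) = (e : (ℝ × E) →L[ℝ] (ℝ × E)) := hder.fderiv
    simp only [hUdef, Set.mem_preimage, Set.mem_setOf_eq, this]
    exact ⟨(ContinuousLinearEquiv.unitsEquiv ℝ (ℝ × E)).symm e, rfl⟩
  -- continuity of k ↦ Φ.symm (k, 0)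
  have hsc : ContinuousAt (fun k : ℝ => Φ.symm (k, 0)) 0 := by
    have h1 : ContinuousAt Φ.symm ((0 : ℝ), (0 : E)) :=
      Φ.symm.continuousAt (by simpa using htgt)
    have h2c : ContinuousAt (fun k : ℝ => ((k : ℝ), (0 : E))) 0 :=
      (continuous_id.prodMk continuous_const).continuousAt
    exact ContinuousAt.comp (f := fun k : ℝ => ((k : ℝ), (0 : E))) h1 h2c
  -- choose δ with |k| < δ → Φ.symm (k,0) ∈ U
  obtain ⟨δ, hδpos, hδ⟩ : ∃ δ > (0 : ℝ), ∀ k : ℝ, |k| < δ → Φ.symm (k, 0) ∈ U := by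
    have := hsc.preimage_mem_nhds (hUopen.mem_nhds (by rwa [hsymm00]))
    rcases Metric.mem_nhds_iff.1 this with ⟨δ, hδpos, hδ⟩
    exact ⟨δ, hδpos, fun k hk => hδ (by simpa [Real.dist_eq] using hk)⟩
  -- choose δ' with |k| < δ' → (k,0) ∈ Φ.target
  obtain ⟨δ', hδ'pos, hδ'⟩ : ∃ δ' > (0 : ℝ), ∀ k : ℝ, |k| < δ' → ((k : ℝ), (0 : E)) ∈ Φ.target := by
    rcases Metric.mem_nhds_iff.1 (Φ.open_target.mem_nhds htgt) with ⟨δ', hδ'pos, hδ'⟩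
    refine ⟨δ', hδ'pos, fun k hk => hδ' ?_⟩
    simp only [Metric.mem_ball, Prod.dist_eq, dist_self, Real.dist_eq, sub_zero]
    exact max_lt hk hδ'pos
  -- choose r with ball ((0,a₀)) r ⊆ source
  obtain ⟨r, hrpos, hr⟩ : ∃ r > (0 : ℝ), Metric.ball ((0 : ℝ), a₀) r ⊆ Φ.source :=
    Metric.mem_nhds_iff.1 (Φ.open_source.mem_nhds hsrc)
  refine ⟨min (min δ δ') (r / 2), by positivity, fun k => (Φ.symm (k, 0)).2, ?_, ?_, ?_, ?_⟩
  · -- smoothness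
    intro k hk
    simp only [Metric.mem_ball, Real.dist_eq, sub_zero] at hk
    have hkδ : |k| < δ := lt_of_lt_of_le hk (le_trans (min_le_left _ _) (min_le_left _ _))
    have hkδ' : |k| < δ' := lt_of_lt_of_le hk (le_trans (min_le_left _ _) (min_le_right _ _))
    have htk : ((k : ℝ), (0 : E)) ∈ Φ.target := hδ' k hkδ'
    have hUk : Φ.symm (k, 0) ∈ U := hδ k hkδ
    have hu' : IsUnit (fderiv ℝ F (Φ.symm (k, 0))) := hUk
    set e' : (ℝ × E) ≃L[ℝ] (ℝ × E) := ContinuousLinearEquiv.unitsEquiv ℝ (ℝ × E) hu'.unit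
      with he'def
    have he'coe : (e' : (ℝ × E) →L[ℝ] (ℝ × E)) = fderiv ℝ F (Φ.symm (k, 0)) := rfl
    have hder' : HasFDerivAt Φ (e' : (ℝ × E) →L[ℝ] (ℝ × E)) (Φ.symm (k, 0)) := by
      rw [hΦcoe, he'coe]
      exact (hFc.differentiable (by simp) _).hasFDerivAt
    have hsymmC : ContDiffAt ℝ (⊤ : ℕ∞) Φ.symm (k, 0) :=
      Φ.contDiffAt_symm htk hder' (by rw [hΦcoe]; exact hFc.contDiffAt)
    have : ContDiffAt ℝ (⊤ : ℕ∞) (fun k : ℝ => (Φ.symm (k, 0)).2) k := by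
      have h2 : ContDiffAt ℝ (⊤ : ℕ∞) (fun k : ℝ => ((k : ℝ), (0 : E))) k :=
        (contDiff_id.prodMk contDiff_const).contDiffAt
      exact ContDiffAt.comp (x := k) contDiff_snd.contDiffAt
        (ContDiffAt.comp (x := k) hsymmC h2)
    exact this.contDiffWithinAt
  · -- value at 0
    show (Φ.symm ((0 : ℝ), (0 : E))).2 = a₀
    rw [hsymm00]
  · -- equation
    intro k hk
    have hkδ' : |k| < δ' := lt_of_lt_of_le hk (le_trans (min_le_left _ _) (min_le_right _ _))
    have htk : ((k : ℝ), (0 : E)) ∈ Φ.target := hδ' k hkδ'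
    have hrinv : Φ (Φ.symm (k, 0)) = ((k : ℝ), (0 : E)) := Φ.right_inv htk
    rw [hΦcoe] at hrinv
    have h1 : (Φ.symm (k, 0)).1 = k := congrArg Prod.fst hrinv
    have h2 : Fred (Φ.symm (k, 0)) = 0 := congrArg Prod.snd hrinv
    have hq : ((k : ℝ), (Φ.symm (k, 0)).2) = Φ.symm (k, 0) := by
      exact Prod.ext_iff.mpr ⟨h1.symm, rfl⟩
    show Fred ((k : ℝ), (Φ.symm (k, 0)).2) = 0
    rw [hq, h2]
  · -- uniqueness
    refine ⟨r / 2, by positivity, fun k hk a hFa0 hda => ?_⟩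
    have hkδ' : |k| < δ' := lt_of_lt_of_le hk (le_trans (min_le_left _ _) (min_le_right _ _))
    have hkr : |k| < r / 2 := lt_of_lt_of_le hk (min_le_right _ _)
    have hmem : ((k : ℝ), a) ∈ Φ.source := by
      apply hr
      simp only [Metric.mem_ball, Prod.dist_eq, Real.dist_eq, sub_zero]
      exact max_lt (by linarith [abs_nonneg k]) (by linarith)
    have htk : ((k : ℝ), (0 : E)) ∈ Φ.target := hδ' k hkδ'
    have hmem' : Φ.symm (k, 0) ∈ Φ.source := Φ.map_target htk
    have hΦka : Φ ((k : ℝ), a) = ((k : ℝ), (0 : E)) := by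
      rw [hΦcoe]; simp [hFdef, hFa0]
    have hΦq : Φ (Φ.symm (k, 0)) = ((k : ℝ), (0 : E)) := Φ.right_inv htk
    have := Φ.injOn hmem hmem' (hΦka.trans hΦq.symm)
    exact congrArg Prod.snd this



/-- The reduced system map for `N` odd with a dark node at site 1: unknowns
`(a₂,…,a_M)`, 0-based as `i ↦ a_{i+2}`, `m = M - 1`:
first row `k a₃ + ω a₂ - a₂³`, middle rows `k(a_{n+1} + a_{n-1}) + ω a_n - a_n³`
for `n = 3,…,M-1`, last row `k(a_M + a_{M-1}) + ω a_M - a_M³`. -/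
def FredOdd (m : ℕ) (hm : 2 ≤ m) (ω : ℝ) (a : Fin m → ℝ) (k : ℝ) (i : Fin m) : ℝ :=
  if i.val = 0 then k * a ⟨1, by omega⟩ + ω * a i - (a i) ^ 3
  else if i.val = m - 1 then k * (a i + a (i - ⟨1, by omega⟩)) + ω * a i - (a i) ^ 3
  else k * (a (i + ⟨1, by omega⟩) + a (i - ⟨1, by omega⟩)) + ω * a i - (a i) ^ 3


noncomputable def brA0 (m : ℕ) (ω : ℝ) : Fin m → ℝ :=
  fun i => if i.val = m - 1 then Real.sqrt ω else 0

noncomputable def brC (m : ℕ) (ω : ℝ) : Fin m → ℝ := fun i => ω - 3 * brA0 m ω i ^ 2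

noncomputable def brV (m : ℕ) (hm : 2 ≤ m) (ω : ℝ) : Fin m → ℝ := fun i =>
  if i.val = 0 then brA0 m ω ⟨1, by omega⟩
  else if i.val = m - 1 then brA0 m ω i + brA0 m ω (i - ⟨1, by omega⟩)
  else brA0 m ω (i + ⟨1, by omega⟩) + brA0 m ω (i - ⟨1, by omega⟩)

lemma brC_eq (m : ℕ) (ω : ℝ) (i : Fin m) : brC m ω i = ω - 3 * brA0 m ω i ^ 2 := rfl

lemma brA0_cases (m : ℕ) (ω : ℝ) (i : Fin m) :
    brA0 m ω i = 0 ∨ brA0 m ω i = Real.sqrt ω := by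
  unfold brA0; split_ifs <;> simp

lemma brKey {ω : ℝ} (x : ℝ) (hx : x = 0 ∨ x = Real.sqrt ω) : ω * x - x ^ 3 = 0 := by
  rcases hx with h | h
  · simp [h]
  · rcases le_or_gt 0 ω with hω | hω
    · have h2 : Real.sqrt ω ^ 2 = ω := Real.sq_sqrt hω
      rw [h, pow_succ, h2]; ring
    · rw [h, Real.sqrt_eq_zero_of_nonpos hω.le]; ring

lemma brC_ne {m : ℕ} {ω : ℝ} (hω : ω ≠ 0) (i : Fin m) : brC m ω i ≠ 0 := by
  unfold brC brA0
  split_ifs with h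
  · rcases le_or_gt 0 ω with hω' | hω'
    · rw [Real.sq_sqrt hω']
      intro hc; apply hω; linarith
    · rw [Real.sqrt_eq_zero_of_nonpos hω'.le]
      simpa using hω
  · simpa using hω

lemma row_hasFDerivAt (m : ℕ) (ω : ℝ) (a₀ : Fin m → ℝ) (B : (Fin m → ℝ) →L[ℝ] ℝ) (i : Fin m) :
    HasFDerivAt (fun p : ℝ × (Fin m → ℝ) => p.1 * B p.2 + ω * p.2 i - p.2 i ^ 3)
      ((B a₀) • fst ℝ ℝ (Fin m → ℝ) +
        (ω - 3 * a₀ i ^ 2) • ((proj i).comp (snd ℝ ℝ (Fin m → ℝ)))) ((0 : ℝ), a₀) := by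
  have h1 : HasFDerivAt (fun p : ℝ × (Fin m → ℝ) => p.1) (fst ℝ ℝ (Fin m → ℝ)) ((0 : ℝ), a₀) :=
    hasFDerivAt_fst
  have hB : HasFDerivAt (fun p : ℝ × (Fin m → ℝ) => B p.2) (B.comp (snd ℝ ℝ (Fin m → ℝ)))
      ((0 : ℝ), a₀) := (B.comp (snd ℝ ℝ (Fin m → ℝ))).hasFDerivAt
  have hPi : HasFDerivAt (fun p : ℝ × (Fin m → ℝ) => p.2 i)
      ((proj i).comp (snd ℝ ℝ (Fin m → ℝ))) ((0 : ℝ), a₀) :=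
    ((proj (R := ℝ) (φ := fun _ : Fin m => ℝ) i).comp (snd ℝ ℝ (Fin m → ℝ))).hasFDerivAt
  have hfun : (fun p : ℝ × (Fin m → ℝ) => p.1 * B p.2 + ω * p.2 i - p.2 i ^ 3) =
      fun p : ℝ × (Fin m → ℝ) => p.1 * B p.2 + ω * p.2 i - p.2 i * p.2 i * p.2 i := by
    funext p; ring
  rw [hfun]
  have h : HasFDerivAt (fun p : ℝ × (Fin m → ℝ) => p.1 * B p.2 + ω * p.2 i - p.2 i * p.2 i * p.2 i) _
      ((0 : ℝ), a₀) := ((h1.mul hB).add (hPi.const_mul ω)).sub ((hPi.mul hPi).mul hPi)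
  refine h.congr_fderiv ?_
  refine ContinuousLinearMap.ext fun p => ?_
  simp only [ContinuousLinearMap.add_apply, ContinuousLinearMap.smul_apply,
    ContinuousLinearMap.sub_apply, ContinuousLinearMap.comp_apply,
    ContinuousLinearMap.coe_fst', ContinuousLinearMap.coe_snd',
    ContinuousLinearMap.proj_apply, smul_eq_mul, Pi.mul_apply]
  ring

-- per-branch function rewriting and B values
section branches
variable (m : ℕ) (hm2 : 2 ≤ m) (ω : ℝ)

lemma fred_eq_row (i : Fin m) :
    ∃ B : (Fin m → ℝ) →L[ℝ] ℝ,
      (fun p : ℝ × (Fin m → ℝ) => FredOdd m hm2 ω p.2 p.1 i) =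
        (fun p : ℝ × (Fin m → ℝ) => p.1 * B p.2 + ω * p.2 i - p.2 i ^ 3) ∧
      B (brA0 m ω) = brV m hm2 ω i := by
  by_cases hi0 : i.val = 0
  · refine ⟨proj ⟨1, by omega⟩, ?_, ?_⟩
    · funext p; simp [FredOdd, hi0]
    · simp [brV, hi0]
  · by_cases him : i.val = m - 1
    · refine ⟨(proj (R := ℝ) (φ := fun _ : Fin m => ℝ) i) + (proj (R := ℝ) (φ := fun _ : Fin m => ℝ) (i - ⟨1, by omega⟩)), ?_, ?_⟩
      · have h1 : m - 1 ≠ 0 := by omega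
        funext p; simp [FredOdd, hi0, him, h1]
      · have h1 : m - 1 ≠ 0 := by omega
        simp [brV, hi0, him, h1]
    · refine ⟨(proj (R := ℝ) (φ := fun _ : Fin m => ℝ) (i + ⟨1, by omega⟩)) + (proj (R := ℝ) (φ := fun _ : Fin m => ℝ) (i - ⟨1, by omega⟩)), ?_, ?_⟩
      · funext p; simp [FredOdd, hi0, him]
      · simp [brV, hi0, him]

end branches

lemma fred_contDiff (m : ℕ) (hm2 : 2 ≤ m) (ω : ℝ) :
    ContDiff ℝ (⊤ : ℕ∞) (fun p : ℝ × (Fin m → ℝ) => fun i => FredOdd m hm2 ω p.2 p.1 i) := by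
  apply contDiff_pi.mpr
  intro i
  obtain ⟨B, hB, -⟩ := fred_eq_row m hm2 ω i
  have : (fun p : ℝ × (Fin m → ℝ) => (fun i => FredOdd m hm2 ω p.2 p.1 i) i) =
      fun p : ℝ × (Fin m → ℝ) => p.1 * B p.2 + ω * p.2 i - p.2 i ^ 3 := hB
  rw [this]
  have hj : ∀ j : Fin m, ContDiff ℝ (⊤ : ℕ∞) (fun p : ℝ × (Fin m → ℝ) => p.2 j) := fun j =>
    ((proj (R := ℝ) (φ := fun _ : Fin m => ℝ) j).comp (snd ℝ ℝ (Fin m → ℝ))).contDiff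
  have hBc : ContDiff ℝ (⊤ : ℕ∞) (fun p : ℝ × (Fin m → ℝ) => B p.2) :=
    (B.comp (snd ℝ ℝ (Fin m → ℝ))).contDiff
  exact ((contDiff_fst.mul hBc).add (contDiff_const.mul (hj i))).sub ((hj i).pow 3)

noncomputable def brEquivL (m : ℕ) (hm2 : 2 ≤ m) (ω : ℝ) (hω : ω ≠ 0) :
    (ℝ × (Fin m → ℝ)) ≃ₗ[ℝ] (ℝ × (Fin m → ℝ)) where
  toFun p := (p.1, fun i => brV m hm2 ω i * p.1 + brC m ω i * p.2 i)
  invFun q := (q.1, fun i => (q.2 i - brV m hm2 ω i * q.1) / brC m ω i)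
  map_add' p q := by
    refine Prod.ext_iff.mpr ⟨rfl, ?_⟩
    funext i
    simp only [Prod.fst_add, Prod.snd_add, Pi.add_apply]
    ring
  map_smul' c p := by
    refine Prod.ext_iff.mpr ⟨rfl, ?_⟩
    funext i
    simp only [Prod.smul_fst, Prod.smul_snd, Pi.smul_apply, smul_eq_mul, RingHom.id_apply]
    ring
  left_inv p := by
    refine Prod.ext_iff.mpr ⟨rfl, ?_⟩
    funext i
    field_simp [brC_ne hω i]
    ring
  right_inv q := by
    refine Prod.ext_iff.mpr ⟨rfl, ?_⟩
    funext i
    field_simp [brC_ne hω i]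
    ring

noncomputable def brEquiv (m : ℕ) (hm2 : 2 ≤ m) (ω : ℝ) (hω : ω ≠ 0) :
    (ℝ × (Fin m → ℝ)) ≃L[ℝ] (ℝ × (Fin m → ℝ)) :=
  (brEquivL m hm2 ω hω).toContinuousLinearEquiv

lemma br_hasFDerivAt (m : ℕ) (hm2 : 2 ≤ m) (ω : ℝ) (hω : ω ≠ 0) :
    HasFDerivAt (fun p : ℝ × (Fin m → ℝ) => (p.1, fun i => FredOdd m hm2 ω p.2 p.1 i))
      (brEquiv m hm2 ω hω : (ℝ × (Fin m → ℝ)) →L[ℝ] (ℝ × (Fin m → ℝ)))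
      ((0 : ℝ), brA0 m ω) := by
  set Lmap : (ℝ × (Fin m → ℝ)) →L[ℝ] (ℝ × (Fin m → ℝ)) :=
    (fst ℝ ℝ (Fin m → ℝ)).prod
      (pi fun i => brV m hm2 ω i • fst ℝ ℝ (Fin m → ℝ) +
        brC m ω i • ((proj i).comp (snd ℝ ℝ (Fin m → ℝ)))) with hLdef
  have hL : HasFDerivAt
      (fun p : ℝ × (Fin m → ℝ) => (p.1, fun i => FredOdd m hm2 ω p.2 p.1 i))
      Lmap ((0 : ℝ), brA0 m ω) := by
    apply HasFDerivAt.prodMk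
    · exact hasFDerivAt_fst
    · apply hasFDerivAt_pi''
      intro i
      rw [proj_pi]
      obtain ⟨B, hB, hBa⟩ := fred_eq_row m hm2 ω i
      have hB' : (fun p : ℝ × (Fin m → ℝ) => (fun i => FredOdd m hm2 ω p.2 p.1 i) i) =
          fun p : ℝ × (Fin m → ℝ) => p.1 * B p.2 + ω * p.2 i - p.2 i ^ 3 := hB
      rw [hB', brC_eq, ← hBa]
      exact row_hasFDerivAt m ω (brA0 m ω) B i
  have hcoe : (brEquiv m hm2 ω hω : (ℝ × (Fin m → ℝ)) →L[ℝ] (ℝ × (Fin m → ℝ))) = Lmap := by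
    refine ContinuousLinearMap.ext fun p => ?_
    refine Prod.ext_iff.mpr ⟨?_, ?_⟩ <;>
      simp [brEquiv, brEquivL, hLdef, ContinuousLinearMap.prod_apply,
        ContinuousLinearMap.pi_apply, ContinuousLinearMap.add_apply,
        ContinuousLinearMap.smul_apply, ContinuousLinearMap.comp_apply,
        ContinuousLinearMap.coe_fst', ContinuousLinearMap.coe_snd',
        ContinuousLinearMap.proj_apply, smul_eq_mul]
  rw [hcoe]
  exact hL

/-- For `N` odd, `M = (N+1)/2`, `ω ≠ 0`, there is `k₀ > 0` such that
the reduced system has a unique smooth solution branch through `(0,…,0,√ω)` at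
`k = 0`, defined for `|k| < k₀`. -/
theorem reduced_system_branch_odd (N : ℕ) (hN : 5 ≤ N) (hNodd : Odd N)
    (M : ℕ) (hM : M = (N + 1) / 2) (ω : ℝ) (hω : ω ≠ 0)
    (m : ℕ) (hm : m = M - 1) (hm2 : 2 ≤ m) :
    ∃ k₀ > (0 : ℝ), ∃ g : ℝ → (Fin m → ℝ),
      ContDiffOn ℝ (⊤ : ℕ∞) g (Metric.ball (0 : ℝ) k₀) ∧
      g 0 = (fun i => if i.val = m - 1 then Real.sqrt ω else 0) ∧
      (∀ k : ℝ, |k| < k₀ → ∀ i, FredOdd m hm2 ω (g k) k i = 0) ∧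
      (∃ ε > (0 : ℝ), ∀ k : ℝ, |k| < k₀ → ∀ a : Fin m → ℝ,
        (∀ i, FredOdd m hm2 ω a k i = 0) →
        dist a (fun i : Fin m => if i.val = m - 1 then Real.sqrt ω else 0) < ε →
        a = g k) := by
  classical
  have h0 : (fun i => FredOdd m hm2 ω (brA0 m ω) 0 i) = (0 : Fin m → ℝ) := by
    funext i
    obtain ⟨B, hB, -⟩ := fred_eq_row m hm2 ω i
    have := congrFun hB ((0 : ℝ), brA0 m ω)
    simp only at this
    rw [this, zero_mul, zero_add]
    exact brKey _ (brA0_cases m ω i)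
  obtain ⟨k₀, hk₀, g, hg1, hg2, hg3, ε, hε, hu⟩ :=
    branch_aux (fun p : ℝ × (Fin m → ℝ) => fun i => FredOdd m hm2 ω p.2 p.1 i)
      (brA0 m ω) (fred_contDiff m hm2 ω) h0 (brEquiv m hm2 ω hω)
      (br_hasFDerivAt m hm2 ω hω)
  refine ⟨k₀, hk₀, g, hg1, hg2, ?_, ε, hε, ?_⟩
  · intro k hk i
    exact congrFun (hg3 k hk) i
  · intro k hk a ha hd
    exact hu k hk a (funext fun i => ha i) hd
end
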